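/- Let (K, v) be an ordered valued field, P ∈ K[X] of degree d ≥ 1, and a < b in K. Let σ₀,…,σ_d ∈ {−1,+1} satisfy σ_k · P^[k](a) ≥ 0 and σ_k · P^[k](b) ≥ 0 for k = 0,…,d−1, and σ_d · (leading coefficient of P) > 0. With a_k, ν_k (0 ≤ k ≤ d) and δ = v(b − a) defined as follows: ε_k = σ₀σ_k, a_k = a if ε_k ε_{k+1} = 1 and a_k = b if ε_k ε_{k+1} = −1 (for 0 ≤ k ≤ d−1), ν_k = v(P^[k](a_k)) for 0 ≤ k ≤ d−1 and ν_d = v(leading coefficient of P). Then for every x ∈ K with a < x < b such that v(x − a) = v(b − x) = v(b − a), one has v(P(x)) = min( ν₀, ν₁ + δ, ν₂ + 2δ, …, ν_d + dδ ). -/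

import Mathlib

/-- An ordered valuation on a linearly ordered field `K`: an additively-written valuation
`v : K → Γ ∪ {∞}` compatible with the order. -/
def IsOrderedValuation {K Γ : Type*} [Field K] [LinearOrder K] [IsStrictOrderedRing K]
    [AddCommGroup Γ] [LinearOrder Γ] [IsOrderedAddMonoid Γ] (v : K → WithTop Γ) : Prop :=
  (∀ x, v x = ⊤ ↔ x = 0) ∧
  (∀ x y, v (x * y) = v x + v y) ∧
  (∀ x y, min (v x) (v y) ≤ v (x + y)) ∧
  (∀ x y : K, 0 ≤ x → x ≤ y → v y ≤ v x)

/-!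
Expand `P` in Newton form on nodes `a₀, a₁, …`: `P(x) = ∑ₖ cₖ ∏_{j<k} (x - aⱼ)`, where `cₖ` is the
divided difference of `P` on `a₀, …, aₖ`. The rule choosing `aⱼ ∈ {a, b}` makes
`σ₀ σₖ ∏_{j<k} (x - aⱼ) > 0`, and we show `σₖ cₖ ≥ 0`, so all terms have the sign of `σ₀`. In an
ordered valued field the valuation of a sum of nonnegative elements is the minimum of their
valuations, hence `v(P(x)) = minₖ (v(cₖ) + kδ)`.

Since the nodes lie in `{a, b}`, `cₖ` is an entry of row `k` of the table of divided differences
of `P` on `a` and `b`. Row `n` runs from `P^[n](b)` to `P^[n](a)`, and consecutive entries differ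
by `(b - a)` times an entry of row `n + 1`. By downward induction on `n`, row `n` is monotone
between two end points of sign `σₙ`, so each of its entries has sign `σₙ` and absolute value at
least `|P^[n](aₙ)|`; and each entry of row `n` has valuation at least `minⱼ (νⱼ + jδ) - nδ`.
This squeezes `v(cₖ) + kδ` between `minⱼ (νⱼ + jδ)` and `νₖ + kδ`.
-/

section OrderedValuation

variable {K Γ : Type*} [Field K] [LinearOrder K] [IsStrictOrderedRing K]
  [AddCommGroup Γ] [LinearOrder Γ] [IsOrderedAddMonoid Γ] {v : K → WithTop Γ}

theorem IsOrderedValuation.map_one (hv : IsOrderedValuation v) : v 1 = 0 := by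
  obtain ⟨g, hg⟩ := WithTop.ne_top_iff_exists.mp fun h => one_ne_zero ((hv.1 1).mp h)
  have h := hv.2.1 1 1
  rw [mul_one, ← hg] at h
  rw [← hg]
  norm_cast at h ⊢
  simpa using h

def IsOrderedValuation.toAddValuation (hv : IsOrderedValuation v) : AddValuation K (WithTop Γ) :=
  AddValuation.of v ((hv.1 0).mpr rfl) hv.map_one hv.2.2.1 hv.2.1

@[simp]
theorem IsOrderedValuation.toAddValuation_apply (hv : IsOrderedValuation v) (x : K) :
    hv.toAddValuation x = v x :=
  rfl

theorem IsOrderedValuation.antitoneOn (hv : IsOrderedValuation v) :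
    AntitoneOn hv.toAddValuation (Set.Ici 0) :=
  fun x hx y _ hxy => hv.2.2.2 x y hx hxy

end OrderedValuation

open Polynomial Finset

theorem Polynomial.divByMonic_divByMonic {R : Type*} [CommRing R] [IsDomain R] {f p q : R[X]}
    (hp : p.Monic) (hq : q.Monic) : f /ₘ p /ₘ q = f /ₘ (p * q) := by
  refine ((div_modByMonic_unique _ (p * (f /ₘ p %ₘ q) + f %ₘ p) (hp.mul hq) ⟨?_, ?_⟩).1).symm
  · linear_combination p * modByMonic_add_div (f /ₘ p) q + modByMonic_add_div f p
  · rw [hq.degree_mul]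
    refine (degree_add_le _ _).trans_lt (max_lt ?_ ?_)
    · rw [degree_mul]
      exact WithBot.add_lt_add_left (degree_ne_bot.mpr hp.ne_zero) (degree_modByMonic_lt _ hq)
    · exact (degree_modByMonic_lt f hp).trans_le
        (le_add_of_nonneg_right (zero_le_degree_iff.mpr hq.ne_zero))

section DividedDifference

variable {R : Type*} [CommRing R]

noncomputable def divDiff (r : R) (Q : R[X]) : R[X] := Q /ₘ (X - C r)

theorem X_sub_C_mul_divDiff_add_C (r : R) (Q : R[X]) :
    (X - C r) * divDiff r Q + C (Q.eval r) = Q := by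
  rw [← modByMonic_X_sub_C_eq_C_eval, add_comm]
  exact modByMonic_add_div Q (X - C r)

theorem eval_eq_mul_eval_divDiff_add (r y : R) (Q : R[X]) :
    Q.eval y = (y - r) * (divDiff r Q).eval y + Q.eval r := by
  conv_lhs => rw [← X_sub_C_mul_divDiff_add_C r Q]
  simp

theorem hasseDeriv_succ_eval_self (r : R) (Q : R[X]) (n : ℕ) :
    (hasseDeriv (n + 1) Q).eval r = (hasseDeriv n (divDiff r Q)).eval r := by
  rw [← taylor_coeff, ← taylor_coeff]
  conv_lhs => rw [← X_sub_C_mul_divDiff_add_C r Q]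
  simp [taylor_mul, taylor_X, taylor_C, coeff_X_mul]

theorem hasseDeriv_eval_self (r : R) (Q : R[X]) (n : ℕ) :
    (hasseDeriv n Q).eval r = ((divDiff r)^[n] Q).eval r := by
  induction n generalizing Q with
  | zero => simp
  | succ n ih => rw [hasseDeriv_succ_eval_self, ih, Function.iterate_succ_apply]

noncomputable def divDiffPoly (P : R[X]) (a b : R) (p q : ℕ) : R[X] :=
  (divDiff a)^[p] ((divDiff b)^[q] P)

theorem divDiff_left_divDiffPoly (P : R[X]) (a b : R) (p q : ℕ) :
    divDiff a (divDiffPoly P a b p q) = divDiffPoly P a b (p + 1) q :=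
  (Function.iterate_succ_apply' _ _ _).symm

/-- `divDiffTable P a b n i` is the divided difference of `P` on the `n + 1` nodes `a` (`i` times)
and `b` (`n + 1 - i` times). -/
noncomputable def divDiffTable (P : R[X]) (a b : R) (n i : ℕ) : R :=
  if i ≤ n then (divDiffPoly P a b i (n - i)).eval b else (divDiffPoly P a b n 0).eval a

theorem divDiffTable_zero (P : R[X]) (a b : R) (n : ℕ) :
    divDiffTable P a b n 0 = (hasseDeriv n P).eval b := by
  simp [divDiffTable, divDiffPoly, hasseDeriv_eval_self]

theorem divDiffTable_self_add_one (P : R[X]) (a b : R) (n : ℕ) :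
    divDiffTable P a b n (n + 1) = (hasseDeriv n P).eval a := by
  simp [divDiffTable, divDiffPoly, hasseDeriv_eval_self]

noncomputable def newtonQuotient (P : R[X]) (r : ℕ → R) : ℕ → R[X]
  | 0 => P
  | k + 1 => divDiff (r k) (newtonQuotient P r k)

theorem eval_eq_sum_newtonQuotient (P : R[X]) (r : ℕ → R) (x : R) (n : ℕ) :
    P.eval x = ∑ k ∈ range n, (newtonQuotient P r k).eval (r k) * ∏ j ∈ range k, (x - r j) +
      (newtonQuotient P r n).eval x * ∏ j ∈ range n, (x - r j) := by
  induction n with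
  | zero => simp [newtonQuotient]
  | succ n ih =>
    rw [ih, eval_eq_mul_eval_divDiff_add (r n) x, sum_range_succ, prod_range_succ, newtonQuotient]
    ring

variable [IsDomain R]

theorem divDiff_commute (a b : R) : Function.Commute (divDiff a) (divDiff b) := fun Q => by
  simp only [divDiff, divByMonic_divByMonic (monic_X_sub_C _) (monic_X_sub_C _), mul_comm]

theorem eval_divDiff_comm (a b : R) (Q : R[X]) : (divDiff a Q).eval b = (divDiff b Q).eval a := by
  rcases eq_or_ne a b with rfl | hab
  · rfl
  refine mul_left_cancel₀ (sub_ne_zero.mpr hab.symm) ?_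
  linear_combination -eval_eq_mul_eval_divDiff_add a b Q - eval_eq_mul_eval_divDiff_add b a Q

theorem natDegree_divDiff (r : R) (Q : R[X]) : (divDiff r Q).natDegree = Q.natDegree - 1 := by
  rw [divDiff, natDegree_divByMonic _ (monic_X_sub_C r), natDegree_X_sub_C]

theorem natDegree_iterate_divDiff (r : R) (Q : R[X]) (k : ℕ) :
    ((divDiff r)^[k] Q).natDegree = Q.natDegree - k := by
  induction k with
  | zero => rfl
  | succ k ih => rw [Function.iterate_succ_apply', natDegree_divDiff, ih, Nat.sub_sub]

theorem leadingCoeff_iterate_divDiff (r : R) (Q : R[X]) {k : ℕ} (hk : k ≤ Q.natDegree) :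
    ((divDiff r)^[k] Q).leadingCoeff = Q.leadingCoeff := by
  induction k with
  | zero => rfl
  | succ k ih =>
    have hpos : 0 < ((divDiff r)^[k] Q).natDegree := by
      rw [natDegree_iterate_divDiff]; omega
    rw [Function.iterate_succ_apply', divDiff, leadingCoeff_divByMonic_X_sub_C _
      (natDegree_pos_iff_degree_pos.mp hpos).ne', ih (by omega)]

theorem divDiff_right_divDiffPoly (P : R[X]) (a b : R) (p q : ℕ) :
    divDiff b (divDiffPoly P a b p q) = divDiffPoly P a b p (q + 1) := by
  rw [divDiffPoly, divDiffPoly, Function.iterate_succ_apply',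
    (divDiff_commute a b).iterate_left p _]

theorem divDiffPoly_eq_C {P : R[X]} {p q : ℕ} (hP : P.natDegree = p + q) (a b : R) :
    divDiffPoly P a b p q = C P.leadingCoeff := by
  set Q := (divDiff b)^[q] P
  have hQ : Q.natDegree = p := by rw [natDegree_iterate_divDiff, hP, Nat.add_sub_cancel]
  have hdeg : ((divDiff a)^[p] Q).natDegree = 0 := by
    rw [natDegree_iterate_divDiff, hQ, Nat.sub_self]
  rw [divDiffPoly, eq_C_of_natDegree_eq_zero hdeg, ← hdeg, ← leadingCoeff,
    leadingCoeff_iterate_divDiff a Q hQ.ge, leadingCoeff_iterate_divDiff b P (by omega)]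

theorem divDiffTable_succ {n i : ℕ} (hi : i ≤ n) (P : R[X]) (a b : R) :
    divDiffTable P a b n (i + 1) = (divDiffPoly P a b i (n - i)).eval a := by
  rcases hi.lt_or_eq with hi | rfl
  · obtain ⟨q, hq⟩ : ∃ q, n - i = q + 1 := ⟨n - i - 1, by omega⟩
    rw [divDiffTable, if_pos (Nat.lt_iff_add_one_le.mp hi), show n - (i + 1) = q by omega, hq,
      ← divDiff_left_divDiffPoly, eval_divDiff_comm, divDiff_right_divDiffPoly]
  · simp [divDiffTable]

theorem divDiffTable_succ_eq_sub {n i : ℕ} (hi : i ≤ n) (P : R[X]) (a b : R) :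
    divDiffTable P a b n (i + 1) =
      divDiffTable P a b n i - (b - a) * divDiffTable P a b (n + 1) (i + 1) := by
  rw [divDiffTable_succ hi, divDiffTable, if_pos hi, divDiffTable, if_pos (by omega),
    show n + 1 - (i + 1) = n - i by omega, ← divDiff_left_divDiffPoly,
    eval_eq_mul_eval_divDiff_add a b (divDiffPoly P a b i (n - i))]
  ring

theorem divDiffTable_natDegree {P : R[X]} {d : ℕ} (hP : P.natDegree = d) (a b : R) (i : ℕ) :
    divDiffTable P a b d i = P.leadingCoeff := by
  unfold divDiffTable
  split_ifs <;> rw [divDiffPoly_eq_C (by omega), eval_C]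

theorem natDegree_newtonQuotient (P : R[X]) (r : ℕ → R) (k : ℕ) :
    (newtonQuotient P r k).natDegree = P.natDegree - k := by
  induction k with
  | zero => rfl
  | succ k ih => rw [newtonQuotient, natDegree_divDiff, ih, Nat.sub_sub]

theorem eval_eq_sum_range_natDegree_newtonQuotient (P : R[X]) (r : ℕ → R) (x : R) :
    P.eval x = ∑ k ∈ range (P.natDegree + 1),
      (newtonQuotient P r k).eval (r k) * ∏ j ∈ range k, (x - r j) := by
  have h : (newtonQuotient P r P.natDegree).natDegree = 0 := by
    rw [natDegree_newtonQuotient, Nat.sub_self]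
  rw [eval_eq_sum_newtonQuotient P r x P.natDegree, sum_range_succ, eq_C_of_natDegree_eq_zero h,
    eval_C, eval_C]

theorem exists_newtonQuotient_eq_divDiffPoly (P : R[X]) {r : ℕ → R} {a b : R}
    (hr : ∀ k, r k = a ∨ r k = b) (k : ℕ) :
    ∃ p q, p + q = k ∧ newtonQuotient P r k = divDiffPoly P a b p q := by
  induction k with
  | zero => exact ⟨0, 0, rfl, rfl⟩
  | succ k ih =>
    obtain ⟨p, q, hpq, hk⟩ := ih
    rcases hr k with hrk | hrk
    · exact ⟨p + 1, q, by omega, by rw [newtonQuotient, hk, hrk, divDiff_left_divDiffPoly]⟩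
    · exact ⟨p, q + 1, by omega, by rw [newtonQuotient, hk, hrk, divDiff_right_divDiffPoly]⟩

theorem exists_divDiffTable_eq_eval_newtonQuotient (P : R[X]) {r : ℕ → R} {a b : R}
    (hr : ∀ k, r k = a ∨ r k = b) (k : ℕ) :
    ∃ i ≤ k + 1, (newtonQuotient P r k).eval (r k) = divDiffTable P a b k i := by
  obtain ⟨p, q, rfl, hk⟩ := exists_newtonQuotient_eq_divDiffPoly P hr k
  rcases hr (p + q) with hrk | hrk
  · refine ⟨p + 1, by omega, ?_⟩
    rw [divDiffTable_succ (by omega), hk, hrk, Nat.add_sub_cancel_left]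
  · refine ⟨p, by omega, ?_⟩
    rw [divDiffTable, if_pos (by omega), hk, hrk, Nat.add_sub_cancel_left]

end DividedDifference

namespace AddValuation

variable {K Γ₀ : Type*} [Ring K] [LinearOrderedAddCommMonoidWithTop Γ₀] (w : AddValuation K Γ₀)

theorem map_sign_mul {s : K} (hs : s = 1 ∨ s = -1) (x : K) : w (s * x) = w x := by
  rcases hs with rfl | rfl <;> simp [w.map_neg]

theorem map_sum_of_nonneg [PartialOrder K] [IsOrderedAddMonoid K] (hw : AntitoneOn w (Set.Ici 0))
    {ι : Type*} {s : Finset ι} (hs : s.Nonempty) {f : ι → K} (hf : ∀ i ∈ s, 0 ≤ f i) :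
    w (∑ i ∈ s, f i) = s.inf' hs fun i => w (f i) :=
  le_antisymm (le_inf' hs _ fun i hi => hw (hf i hi) (sum_nonneg hf) (single_le_sum hf hi))
    (w.map_le_sum fun _ hi => inf'_le _ hi)

theorem le_map_add_iff_of_le_map_sub {x y : K} {μ c : Γ₀} (h : μ ≤ w (y - x) + c) :
    μ ≤ w y + c ↔ μ ≤ w x + c := by
  have key : ∀ {x y : K}, μ ≤ w (y - x) + c → μ ≤ w x + c → μ ≤ w y + c := fun {x y} h hx =>
    calc μ ≤ min (w x) (w (y - x)) + c := by rw [← min_add_add_right]; exact le_min hx h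
      _ ≤ w y + c := by gcongr; simpa using w.map_add x (y - x)
  exact ⟨key (by rwa [w.map_sub_swap]), key h⟩

theorem le_map_add_iff_of_chain {f : ℕ → K} {L : ℕ} {μ c : Γ₀}
    (hstep : ∀ i < L, μ ≤ w (f (i + 1) - f i) + c) {i : ℕ} (hi : i ≤ L) :
    μ ≤ w (f i) + c ↔ μ ≤ w (f 0) + c := by
  induction i with
  | zero => rfl
  | succ i ih => rw [← ih (by omega)]; exact w.le_map_add_iff_of_le_map_sub (hstep i (by omega))

end AddValuation

section Table

variable {K : Type*} [CommRing K] {D : ℕ → ℕ → K} {a b : K} {d : ℕ}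

theorem AddValuation.le_map_table_add_nsmul {Γ₀ : Type*} [LinearOrderedAddCommMonoidWithTop Γ₀]
    (w : AddValuation K Γ₀) {j : ℕ → ℕ} (hj : ∀ n, j n ≤ n + 1)
    (hrec : ∀ n < d, ∀ i ≤ n, D n (i + 1) = D n i - (b - a) * D (n + 1) (i + 1))
    (htop : ∀ i ≤ d + 1, D d i = D d 0) {μ : Γ₀}
    (hμ : ∀ n ≤ d, μ ≤ w (D n (j n)) + n • w (b - a)) {n : ℕ} (hn : n ≤ d) {i : ℕ}
    (hi : i ≤ n + 1) : μ ≤ w (D n i) + n • w (b - a) := by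
  induction hn using Nat.decreasingInduction generalizing i with
  | self => rw [htop i hi, ← htop _ (hj d)]; exact hμ d le_rfl
  | of_succ n hn ih =>
    have hrow : ∀ i < n + 1, μ ≤ w (D n (i + 1) - D n i) + n • w (b - a) := fun i hi' => by
      rw [hrec n hn i (by omega), sub_sub_cancel_left, w.map_neg, w.map_mul, add_right_comm,
        add_comm, ← succ_nsmul']
      exact ih (by omega)
    exact (w.le_map_add_iff_of_chain hrow hi).mpr
      ((w.le_map_add_iff_of_chain hrow (hj n)).mp (hμ n hn.le))

variable [LinearOrder K] {σ : ℕ → K}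

/-- The column of row `n` of a divided-difference table on `a, b` that holds `P^[n](aₙ)`. -/
def anchor (σ : ℕ → K) (n : ℕ) : ℕ := if σ n * σ (n + 1) = 1 then n + 1 else 0

theorem anchor_le (σ : ℕ → K) (n : ℕ) : anchor σ n ≤ n + 1 := by
  unfold anchor; split_ifs <;> omega

theorem anchor_nonneg {n : ℕ} (h0 : 0 ≤ σ n * D n 0) (h1 : 0 ≤ σ n * D n (n + 1)) :
    0 ≤ σ n * D n (anchor σ n) := by
  unfold anchor; split_ifs <;> assumption

variable [IsStrictOrderedRing K]

theorem row_endpoint_le {f : ℕ → K} {L : ℕ} {e : K} (he : e = 1 ∨ e = -1)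
    (hstep : ∀ i < L, 0 ≤ e * (f i - f (i + 1))) {i : ℕ} (hi : i ≤ L) :
    f (if e = 1 then L else 0) ≤ f i := by
  rcases he with rfl | rfl
  · rw [if_pos rfl]
    refine antitoneOn_of_succ_le Set.ordConnected_Iic (fun m _ _ hm => ?_) hi Set.self_mem_Iic hi
    have := hstep m (by simpa using hm)
    simp only [Order.succ_eq_add_one]; linarith
  · rw [if_neg (by norm_num)]
    refine monotoneOn_of_le_succ Set.ordConnected_Iic (fun m _ _ hm => ?_) (by simp) hi
      (Nat.zero_le i)
    have := hstep m (by simpa using hm)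
    simp only [Order.succ_eq_add_one]; linarith

theorem table_sign_mul_anchor_le (hab : a < b) (hσ : ∀ k ≤ d, σ k = 1 ∨ σ k = -1)
    (hrec : ∀ n < d, ∀ i ≤ n, D n (i + 1) = D n i - (b - a) * D (n + 1) (i + 1))
    (h0 : ∀ n ≤ d, 0 ≤ σ n * D n 0) (h1 : ∀ n ≤ d, 0 ≤ σ n * D n (n + 1))
    (htop : ∀ i ≤ d + 1, D d i = D d 0) {n : ℕ} (hn : n ≤ d) {i : ℕ} (hi : i ≤ n + 1) :
    σ n * D n (anchor σ n) ≤ σ n * D n i := by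
  induction hn using Nat.decreasingInduction generalizing i with
  | self => rw [htop i hi, htop _ (anchor_le σ d)]
  | of_succ n hn ih =>
    have hnext : ∀ j ≤ n + 2, 0 ≤ σ (n + 1) * D (n + 1) j := fun j hj =>
      (anchor_nonneg (h0 _ hn) (h1 _ hn)).trans (ih hj)
    have hsq : σ n * σ n = 1 := mul_self_eq_one_iff.mpr (hσ n hn.le)
    have he : σ n * σ (n + 1) = 1 ∨ σ n * σ (n + 1) = -1 := by
      rcases hσ n hn.le with h | h <;> rcases hσ (n + 1) hn with h' | h' <;> simp [h, h']
    refine row_endpoint_le (f := fun i => σ n * D n i) he (fun j hj => ?_) hi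
    calc (0 : K) ≤ (b - a) * (σ (n + 1) * D (n + 1) (j + 1)) :=
          mul_nonneg (sub_nonneg.mpr hab.le) (hnext _ (by omega))
      _ = _ := by
        rw [hrec n hn j (by omega)]
        linear_combination (-(b - a) * σ (n + 1) * D (n + 1) (j + 1)) * hsq

end Table

section Newton

variable {K : Type*} [Field K] [LinearOrder K] {σ : ℕ → K} {a b x : K}

def node (σ : ℕ → K) (a b : K) (k : ℕ) : K := if σ k * σ (k + 1) = 1 then a else b

theorem node_eq_or (σ : ℕ → K) (a b : K) (k : ℕ) : node σ a b k = a ∨ node σ a b k = b := by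
  unfold node; split_ifs <;> simp

theorem divDiffTable_anchor {P : K[X]} {d : ℕ} (hP : P.natDegree = d) (σ : ℕ → K) (a b : K)
    (k : ℕ) : divDiffTable P a b k (anchor σ k) =
      if k = d then P.leadingCoeff else (hasseDeriv k P).eval (node σ a b k) := by
  split_ifs with hk
  · exact hk ▸ divDiffTable_natDegree hP a b _
  · unfold anchor node; split_ifs
    exacts [divDiffTable_self_add_one P a b k, divDiffTable_zero P a b k]

variable {Γ₀ : Type*} [LinearOrderedAddCommMonoidWithTop Γ₀] (w : AddValuation K Γ₀)

theorem AddValuation.map_prod_sub_node (ha : w (x - a) = w (b - a)) (hb : w (b - x) = w (b - a))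
    (k : ℕ) : w (∏ j ∈ range k, (x - node σ a b j)) = k • w (b - a) := by
  have hnode : ∀ j, w (x - node σ a b j) = w (b - a) := fun j => by
    rcases node_eq_or σ a b j with h | h <;> rw [h]
    exacts [ha, by rw [w.map_sub_swap, hb]]
  induction k with
  | zero => simp
  | succ k ih => rw [prod_range_succ, w.map_mul, ih, succ_nsmul, hnode]

variable [IsStrictOrderedRing K]

theorem sign_mul_sub_node_pos {k : ℕ} (hk : σ k = 1 ∨ σ k = -1)
    (hk' : σ (k + 1) = 1 ∨ σ (k + 1) = -1) (hax : a < x) (hxb : x < b) :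
    0 < σ k * σ (k + 1) * (x - node σ a b k) := by
  have he : σ k * σ (k + 1) = 1 ∨ σ k * σ (k + 1) = -1 := by
    rcases hk with h | h <;> rcases hk' with h' | h' <;> simp [h, h']
  rcases he with he | he <;> simp only [node, he] <;> norm_num <;> linarith

theorem sign_mul_prod_sub_node_pos {d : ℕ} (hσ : ∀ k ≤ d, σ k = 1 ∨ σ k = -1) (hax : a < x)
    (hxb : x < b) {k : ℕ} (hk : k ≤ d) : 0 < σ 0 * σ k * ∏ j ∈ range k, (x - node σ a b j) := by
  induction k with
  | zero => simp [mul_self_eq_one_iff.mpr (hσ 0 hk)]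
  | succ k ih =>
    have hsq : σ k * σ k = 1 := mul_self_eq_one_iff.mpr (hσ k (by omega))
    calc (0 : K) < (σ 0 * σ k * ∏ j ∈ range k, (x - node σ a b j)) *
          (σ k * σ (k + 1) * (x - node σ a b k)) :=
          mul_pos (ih (by omega)) (sign_mul_sub_node_pos (hσ k (by omega)) (hσ _ hk) hax hxb)
      _ = _ := by
        rw [prod_range_succ]
        linear_combination (σ 0 * σ (k + 1) * (∏ j ∈ range k, (x - node σ a b j)) *
          (x - node σ a b k)) * hsq

theorem AddValuation.map_eval_eq_inf'_newtonQuotient (hw : AntitoneOn w (Set.Ici 0)) {P : K[X]}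
    (hσ : ∀ k ≤ P.natDegree, σ k = 1 ∨ σ k = -1) (hax : a < x) (hxb : x < b)
    (ha : w (x - a) = w (b - a)) (hb : w (b - x) = w (b - a))
    (hc : ∀ k ≤ P.natDegree, 0 ≤ σ k * (newtonQuotient P (node σ a b) k).eval (node σ a b k)) :
    w (P.eval x) = (range (P.natDegree + 1)).inf' nonempty_range_add_one fun k =>
      w ((newtonQuotient P (node σ a b) k).eval (node σ a b k)) + k • w (b - a) := by
  set c := fun k => (newtonQuotient P (node σ a b) k).eval (node σ a b k)
  set π := fun k => ∏ j ∈ range k, (x - node σ a b j)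
  have hsum : σ 0 * P.eval x =
      ∑ k ∈ range (P.natDegree + 1), σ k * c k * (σ 0 * σ k * π k) := by
    rw [eval_eq_sum_range_natDegree_newtonQuotient P (node σ a b) x, mul_sum]
    refine sum_congr rfl fun k hk => ?_
    linear_combination
      (-σ 0 * c k * π k) * mul_self_eq_one_iff.mpr (hσ k (mem_range_succ_iff.mp hk))
  have hterm : ∀ k ∈ range (P.natDegree + 1), 0 ≤ σ k * c k * (σ 0 * σ k * π k) := fun k hk =>
    mul_nonneg (hc k (mem_range_succ_iff.mp hk))
      (sign_mul_prod_sub_node_pos hσ hax hxb (mem_range_succ_iff.mp hk)).le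
  rw [← w.map_sign_mul (hσ 0 (Nat.zero_le _)), hsum,
    w.map_sum_of_nonneg hw nonempty_range_add_one hterm]
  refine inf'_congr _ rfl fun k hk => ?_
  have hσk := hσ k (mem_range_succ_iff.mp hk)
  rw [w.map_mul, mul_assoc (σ 0), w.map_sign_mul hσk, w.map_sign_mul (hσ 0 (Nat.zero_le _)),
    w.map_sign_mul hσk, w.map_prod_sub_node ha hb]

theorem AddValuation.map_eval_eq_inf'_anchor (hw : AntitoneOn w (Set.Ici 0)) {P : K[X]} {d : ℕ}
    (hP : P.natDegree = d) (hab : a < b) (hσ : ∀ k ≤ d, σ k = 1 ∨ σ k = -1)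
    (hga : ∀ k < d, 0 ≤ σ k * (hasseDeriv k P).eval a)
    (hgb : ∀ k < d, 0 ≤ σ k * (hasseDeriv k P).eval b) (hlead : 0 ≤ σ d * P.leadingCoeff)
    (hax : a < x) (hxb : x < b) (ha : w (x - a) = w (b - a)) (hb : w (b - x) = w (b - a)) :
    w (P.eval x) = (range (d + 1)).inf' nonempty_range_add_one fun k =>
      w (divDiffTable P a b k (anchor σ k)) + k • w (b - a) := by
  subst hP
  set D := divDiffTable P a b with hD
  have htop : ∀ i, D P.natDegree i = P.leadingCoeff := divDiffTable_natDegree rfl a b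
  have h0 : ∀ n ≤ P.natDegree, 0 ≤ σ n * D n 0 := fun n hn => by
    rcases hn.lt_or_eq with hn | rfl
    exacts [by rw [hD, divDiffTable_zero]; exact hgb n hn, (htop 0).symm ▸ hlead]
  have h1 : ∀ n ≤ P.natDegree, 0 ≤ σ n * D n (n + 1) := fun n hn => by
    rcases hn.lt_or_eq with hn | rfl
    exacts [by rw [hD, divDiffTable_self_add_one]; exact hga n hn, (htop _).symm ▸ hlead]
  have hrec : ∀ n < P.natDegree, ∀ i ≤ n, D n (i + 1) = D n i - (b - a) * D (n + 1) (i + 1) :=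
    fun n _ i hi => divDiffTable_succ_eq_sub hi P a b
  have htop' : ∀ i ≤ P.natDegree + 1, D P.natDegree i = D P.natDegree 0 :=
    fun i _ => (htop i).trans (htop 0).symm
  have hcoeff := exists_divDiffTable_eq_eval_newtonQuotient P (node_eq_or σ a b)
  have hanchor : ∀ k ≤ P.natDegree, σ k * D k (anchor σ k) ≤
      σ k * (newtonQuotient P (node σ a b) k).eval (node σ a b k) := fun k hk => by
    obtain ⟨i, hi, hci⟩ := hcoeff k
    exact hci ▸ table_sign_mul_anchor_le hab hσ hrec h0 h1 htop' hk hi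
  rw [w.map_eval_eq_inf'_newtonQuotient hw hσ hax hxb ha hb fun k hk =>
    (anchor_nonneg (h0 k hk) (h1 k hk)).trans (hanchor k hk)]
  refine le_antisymm (le_inf' _ _ fun k hk => (inf'_le _ hk).trans ?_) (le_inf' _ _ fun k hk => ?_)
  · have hk := mem_range_succ_iff.mp hk
    have h := anchor_nonneg (h0 k hk) (h1 k hk)
    gcongr
    rw [← w.map_sign_mul (hσ k hk), ← w.map_sign_mul (hσ k hk) (D k _)]
    exact hw h (h.trans (hanchor k hk)) (hanchor k hk)
  · obtain ⟨i, hi, hci⟩ := hcoeff k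
    rw [hci]
    exact w.le_map_table_add_nsmul (anchor_le σ) hrec htop'
      (fun n hn => inf'_le _ (mem_range_succ_iff.mpr hn)) (mem_range_succ_iff.mp hk) hi

end Newton

theorem valuation_thom_interval_unit_general {K Γ : Type*} [Field K] [LinearOrder K] [IsStrictOrderedRing K]
    [AddCommGroup Γ] [LinearOrder Γ] [IsOrderedAddMonoid Γ] (v : K → WithTop Γ) (hv : IsOrderedValuation v)
    (P : Polynomial K) (d : ℕ) (hdeg : P.natDegree = d)
    (a b : K) (hab : a < b)
    (σ : ℕ → ℤ) (hσ : ∀ k, k ≤ d → σ k = 1 ∨ σ k = -1)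
    (hga : ∀ k, k < d → 0 ≤ (σ k : K) * (Polynomial.hasseDeriv k P).eval a)
    (hgb : ∀ k, k < d → 0 ≤ (σ k : K) * (Polynomial.hasseDeriv k P).eval b)
    (hlead : 0 < (σ d : K) * P.leadingCoeff)
    (x : K) (hax : a < x) (hxb : x < b)
    (h1 : v (x - a) = v (b - a)) (h2 : v (b - x) = v (b - a)) :
    v (P.eval x) =
      (Finset.range (d + 1)).inf' Finset.nonempty_range_add_one
        (fun j =>
          (if j = d then v P.leadingCoeff
           else v ((Polynomial.hasseDeriv j P).eval
              (if (σ 0 * σ j) * (σ 0 * σ (j + 1)) = 1 then a else b)))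
          + j • v (b - a)) := by
  have hσK : ∀ k ≤ d, (σ k : K) = 1 ∨ (σ k : K) = -1 := fun k hk => by
    rcases hσ k hk with h | h <;> simp [h]
  have hcond : ∀ j, (σ 0 * σ j) * (σ 0 * σ (j + 1)) = 1 ↔ (σ j : K) * σ (j + 1) = 1 := fun j => by
    rw [show (σ 0 * σ j) * (σ 0 * σ (j + 1)) = σ j * σ (j + 1) by
      linear_combination (σ j * σ (j + 1)) * mul_self_eq_one_iff.mpr (hσ 0 (Nat.zero_le d))]
    norm_cast
  refine (hv.toAddValuation.map_eval_eq_inf'_anchor hv.antitoneOn hdeg hab hσK hga hgb hlead.le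
    hax hxb h1 h2).trans (inf'_congr _ rfl fun j _ => ?_)
  simp only [divDiffTable_anchor hdeg, node, hcond, apply_ite v,
    IsOrderedValuation.toAddValuation_apply]

/-- **Valuation of `P(x)` at a "unit" point of a Thom interval.**
With `ε_k = σ₀σ_k`, `a_k = a` if `ε_k ε_{k+1} = 1` and `a_k = b` otherwise,
`ν_k = v(P^[k](a_k))` (`ν_d = v(leading coefficient)`) and `δ = v(b−a)`: for every
`x` with `a < x < b` and `v(x−a) = v(b−x) = v(b−a)`,
`v(P(x)) = min( ν₀, ν₁ + δ, ν₂ + 2δ, …, ν_d + dδ )`. -/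
theorem valuation_thom_interval_unit {K Γ : Type*} [Field K] [LinearOrder K] [IsStrictOrderedRing K]
    [AddCommGroup Γ] [LinearOrder Γ] [IsOrderedAddMonoid Γ] (v : K → WithTop Γ) (hv : IsOrderedValuation v)
    (P : Polynomial K) (d : ℕ) (hd : 1 ≤ d) (hdeg : P.natDegree = d)
    (a b : K) (hab : a < b)
    (σ : ℕ → ℤ) (hσ : ∀ k, k ≤ d → σ k = 1 ∨ σ k = -1)
    (hga : ∀ k, k < d → 0 ≤ (σ k : K) * (Polynomial.hasseDeriv k P).eval a)
    (hgb : ∀ k, k < d → 0 ≤ (σ k : K) * (Polynomial.hasseDeriv k P).eval b)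
    (hlead : 0 < (σ d : K) * P.leadingCoeff)
    (x : K) (hax : a < x) (hxb : x < b)
    (h1 : v (x - a) = v (b - a)) (h2 : v (b - x) = v (b - a)) :
    v (P.eval x) =
      (Finset.range (d + 1)).inf' Finset.nonempty_range_add_one
        (fun j =>
          (if j = d then v P.leadingCoeff
           else v ((Polynomial.hasseDeriv j P).eval
              (if (σ 0 * σ j) * (σ 0 * σ (j + 1)) = 1 then a else b)))
          + j • v (b - a)) :=
  valuation_thom_interval_unit_general v hv P d hdeg a b hab σ hσ hga hgb hlead x hax hxb h1 h2
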